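/- arXiv:2403.04860 — 4 statements merged into one kernel-verified Lean document; each statement's English description precedes it below -/
import Mathlib

section
/- Let c ∈ [0,1) and let (α_k)_{k≥1} satisfy α_k ∈ [0,1) and 1/(1−α_{k+1}) − 1/(1−α_k) ≤ c for every k ≥ 1. Then for each k ≥ 1 the series ∑_{i=k}^∞ ∏_{j=k}^i α_j converges, and with t_{k+1} := 1 + ∑_{i=k+1}^∞ ∏_{j=k+1}^i α_j one has t_{k+1} ≤ 1/((1−c)(1−α_k)) for every k ≥ 1. -/
/-- Under condition (5.1), the series defining `t_k` converges and
`t_{k+1} ≤ 1/((1-c)(1-α_k))`. -/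
theorem tk_bound_special_class
    (c : ℝ) (hc : c ∈ Set.Ico (0 : ℝ) 1)
    (α : ℕ → ℝ) (hα : ∀ k ≥ 1, α k ∈ Set.Ico (0 : ℝ) 1)
    (hineq : ∀ k ≥ 1, 1 / (1 - α (k + 1)) - 1 / (1 - α k) ≤ c)
    (t : ℕ → ℝ)
    (ht : ∀ k ≥ 1, t k = 1 + ∑' n : ℕ, ∏ j ∈ Finset.Icc k (k + n), α j) :
    ∀ k ≥ 1, Summable (fun n : ℕ => ∏ j ∈ Finset.Icc k (k + n), α j) ∧
      t (k + 1) ≤ 1 / ((1 - c) * (1 - α k)) := by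
  obtain ⟨hc0, hc1⟩ := hc
  have hbot : ∀ a b : ℕ, a ≤ b →
      ∏ j ∈ Finset.Icc a b, α j = α a * ∏ j ∈ Finset.Icc (a+1) b, α j := by
    intro a b h
    have hins : Finset.Icc a b = insert a (Finset.Icc (a+1) b) := by
      ext x; simp; omega
    rw [hins, Finset.prod_insert (by simp)]
  have key : ∀ N : ℕ, ∀ k, 1 ≤ k →
      1 + ∑ n ∈ Finset.range N, ∏ j ∈ Finset.Icc (k+1) (k+1+n), α j
        ≤ 1 / ((1-c)*(1-α k)) := by
    intro N
    induction N with
    | zero =>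
      intro k hk
      obtain ⟨ha0, ha1⟩ := hα k hk
      have h1 : 0 < (1-c)*(1-α k) := by nlinarith
      rw [Finset.sum_range_zero, add_zero, le_div_iff₀ h1]
      nlinarith
    | succ N ih =>
      intro k hk
      obtain ⟨ha0, ha1⟩ := hα k hk
      obtain ⟨hb0, hb1⟩ := hα (k+1) (by omega)
      have hrw : ∑ n ∈ Finset.range (N+1), ∏ j ∈ Finset.Icc (k+1) (k+1+n), α j
          = α (k+1) * (1 + ∑ m ∈ Finset.range N, ∏ j ∈ Finset.Icc (k+2) (k+2+m), α j) := by
        rw [Finset.sum_range_succ']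
        have h0 : ∏ j ∈ Finset.Icc (k+1) (k+1+0), α j = α (k+1) := by simp
        have hterm : ∀ m ∈ Finset.range N,
            ∏ j ∈ Finset.Icc (k+1) (k+1+(m+1)), α j
              = α (k+1) * ∏ j ∈ Finset.Icc (k+2) (k+2+m), α j := by
          intro m _
          have h2 : k+1+(m+1) = k+2+m := by omega
          rw [h2, hbot (k+1) (k+2+m) (by omega)]
        rw [h0, Finset.sum_congr rfl hterm, ← Finset.mul_sum]
        ring
      rw [hrw]
      have ihk := ih (k+1) (by omega)
      have hiq := hineq k hk
      have d1 : 0 < 1 - α k := by linarith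
      have d2 : 0 < 1 - α (k+1) := by linarith
      have e : 0 < 1 - c := by linarith
      have hlin : (1 - α k) - (1 - α (k+1)) ≤ c * ((1-α k)*(1-α (k+1))) := by
        have h := mul_le_mul_of_nonneg_right hiq (mul_pos d1 d2).le
        have i1 : (1 - α k) * ((1 - α (k+1)) * (1/(1-α (k+1)))) = (1 - α k) := by
          rw [mul_one_div_cancel d2.ne', mul_one]
        have i2 : (1 - α (k+1)) * ((1 - α k) * (1/(1-α k))) = (1 - α (k+1)) := by
          rw [mul_one_div_cancel d1.ne', mul_one]
        nlinarith [h, i1, i2]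
      have step1 : α (k+1) * (1 + ∑ m ∈ Finset.range N, ∏ j ∈ Finset.Icc (k+2) (k+2+m), α j)
          ≤ α (k+1) * (1/((1-c)*(1-α (k+1)))) :=
        mul_le_mul_of_nonneg_left ihk hb0
      have hfin : 1 + α (k+1) * (1/((1-c)*(1-α (k+1)))) ≤ 1/((1-c)*(1-α k)) := by
        have hrw2 : 1 + α (k+1) * (1/((1-c)*(1-α (k+1))))
            = ((1-c)*(1-α (k+1)) + α (k+1)) / ((1-c)*(1-α (k+1))) := by
          field_simp
        rw [hrw2, div_le_div_iff₀ (mul_pos e d2) (mul_pos e d1)]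
        nlinarith [mul_le_mul_of_nonneg_left hlin e.le, hlin, mul_pos e d1, mul_pos e d2]
      linarith
  have hnn : ∀ a b : ℕ, 1 ≤ a → 0 ≤ ∏ j ∈ Finset.Icc a b, α j := by
    intro a b ha
    apply Finset.prod_nonneg
    intro j hj
    simp at hj
    exact (hα j (by omega)).1
  have hsummable : ∀ k, 1 ≤ k → Summable (fun n : ℕ => ∏ j ∈ Finset.Icc k (k+n), α j) := by
    intro k hk
    obtain ⟨ha0, ha1⟩ := hα k hk
    apply summable_of_sum_range_le (c := α k * (1/((1-c)*(1-α k))))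
      (fun n => hnn k (k+n) hk)
    intro N
    cases N with
    | zero =>
      rw [Finset.sum_range_zero]
      have h1 : (0:ℝ) < 1 - c := by linarith
      have h2 : (0:ℝ) < 1 - α k := by linarith
      exact mul_nonneg ha0 (one_div_nonneg.mpr (mul_nonneg h1.le h2.le))
    | succ N =>
      rw [Finset.sum_range_succ']
      have h0 : ∏ j ∈ Finset.Icc k (k+0), α j = α k := by simp
      have hterm : ∀ m ∈ Finset.range N,
          ∏ j ∈ Finset.Icc k (k+(m+1)), α j
            = α k * ∏ j ∈ Finset.Icc (k+1) (k+1+m), α j := by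
        intro m _
        have h2 : k+(m+1) = k+1+m := by omega
        rw [h2, hbot k (k+1+m) (by omega)]
      rw [h0, Finset.sum_congr rfl hterm, ← Finset.mul_sum]
      have := key N k hk
      nlinarith
  intro k hk
  refine ⟨hsummable k hk, ?_⟩
  rw [ht (k+1) (by omega)]
  have hs1 := hsummable (k+1) (by omega)
  have htsum : (∑' n : ℕ, ∏ j ∈ Finset.Icc (k+1) ((k+1)+n), α j)
      ≤ 1/((1-c)*(1-α k)) - 1 := by
    apply Summable.tsum_le_of_sum_range_le hs1
    intro N
    have := key N k hk
    linarith
  linarith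
end

section
/- Let c ∈ [0,1/3] and let (α_k)_{k≥1} satisfy α_k ∈ [0,1) and 1/(1−α_{k+1}) − 1/(1−α_k) ≤ c for all k ≥ 1. Define t_k = 1 + ∑_{i=k}^∞ ∏_{j=k}^i α_j (convergent). Then t_{k+1}² − t_k² ≤ t_{k+1} for all k ≥ 1; and if moreover c < 1/3 then there exists m ∈ [0,1) with t_{k+1}² − t_k² ≤ m t_{k+1} for all k ≥ 1. -/
/-- Under condition (5.1) with `c ≤ 1/3`, condition (K₁) holds; if `c < 1/3`,
condition (K₁⁺) holds for some `m ∈ [0,1)`. -/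
theorem tk_K1_special_class
    (c : ℝ) (hc : c ∈ Set.Icc (0 : ℝ) (1 / 3))
    (α : ℕ → ℝ) (hα : ∀ k ≥ 1, α k ∈ Set.Ico (0 : ℝ) 1)
    (hineq : ∀ k ≥ 1, 1 / (1 - α (k + 1)) - 1 / (1 - α k) ≤ c)
    (t : ℕ → ℝ)
    (ht : ∀ k ≥ 1, t k = 1 + ∑' n : ℕ, ∏ j ∈ Finset.Icc k (k + n), α j) :
    (∀ k ≥ 1, t (k + 1) ^ 2 - t k ^ 2 ≤ t (k + 1)) ∧
    (c < 1 / 3 → ∃ m ∈ Set.Ico (0 : ℝ) 1,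
      ∀ k ≥ 1, t (k + 1) ^ 2 - t k ^ 2 ≤ m * t (k + 1)) := by
  obtain ⟨hc0, hc13⟩ := hc
  have h1c : (0:ℝ) < 1 - c := by linarith
  set β : ℕ → ℝ := fun k => 1 / (1 - α k) with hβdef
  have h1α : ∀ k ≥ 1, (0:ℝ) < 1 - α k := fun k hk => by linarith [(hα k hk).2]
  have hβpos : ∀ k ≥ 1, (0:ℝ) < β k := fun k hk => one_div_pos.mpr (h1α k hk)
  have hβ1 : ∀ k ≥ 1, (1:ℝ) ≤ β k := by
    intro k hk
    rw [hβdef]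
    rw [le_div_iff₀ (h1α k hk)]
    have := (hα k hk).1
    linarith
  have hβinv : ∀ k ≥ 1, 1 - α k = 1 / β k := fun k hk => by
    rw [hβdef, one_div_one_div]
  have hαβ : ∀ k ≥ 1, α k * β k = β k - 1 := by
    intro k hk
    have h := h1α k hk
    rw [hβdef]
    field_simp
    ring
  have hβstep : ∀ k ≥ 1, β (k+1) ≤ β k + c := by
    intro k hk
    have := hineq k hk
    simp only [hβdef]
    linarith
  have hsplit : ∀ k i : ℕ, ∏ j ∈ Finset.Icc k (k + (i+1)), α j
      = α k * ∏ j ∈ Finset.Icc (k+1) (k+1+i), α j := by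
    intro k i
    have h1 : Finset.Icc k (k + (i+1)) = insert k (Finset.Icc (k+1) (k+1+i)) := by
      ext x
      simp only [Finset.mem_Icc, Finset.mem_insert]
      omega
    rw [h1, Finset.prod_insert (by simp [Finset.mem_Icc])]
  have key : ∀ N : ℕ, ∀ k, k ≥ 1 →
      ∑ n ∈ Finset.range (N+1), ∏ j ∈ Finset.Icc k (k+n), α j ≤ (β k - 1) / (1 - c) := by
    intro N
    induction N with
    | zero =>
      intro k hk
      rw [Finset.sum_range_one]
      simp only [Nat.add_zero, Finset.Icc_self, Finset.prod_singleton]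
      rw [le_div_iff₀ h1c]
      have h1 := hαβ k hk
      have h2 := hβ1 k hk
      have h3 := (hα k hk).1
      nlinarith [mul_nonneg h3 (show (0:ℝ) ≤ β k - 1 + c by linarith)]
    | succ N ih =>
      intro k hk
      have hk1 : k + 1 ≥ 1 := Nat.le_add_left 1 k
      have hQ := ih (k+1) hk1
      rw [Finset.sum_range_succ']
      simp only [hsplit k]
      rw [← Finset.mul_sum]
      simp only [Nat.add_zero, Finset.Icc_self, Finset.prod_singleton]
      have ha0 : 0 ≤ α k := (hα k hk).1
      have h2 : α k * (∑ i ∈ Finset.range (N+1), ∏ j ∈ Finset.Icc (k+1) (k+1+i), α j) + α k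
          ≤ α k * ((β (k+1) - 1)/(1-c)) + α k := by
        have := mul_le_mul_of_nonneg_left hQ ha0
        linarith
      refine h2.trans ?_
      rw [le_div_iff₀ h1c, add_mul, mul_assoc, div_mul_cancel₀ _ (ne_of_gt h1c)]
      nlinarith [mul_le_mul_of_nonneg_left (hβstep k hk) ha0, hαβ k hk]
  have hnonneg : ∀ k, k ≥ 1 → ∀ n, 0 ≤ ∏ j ∈ Finset.Icc k (k+n), α j := by
    intro k hk n
    apply Finset.prod_nonneg
    intro j hj
    exact (hα j (le_trans hk (Finset.mem_Icc.mp hj).1)).1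
  have hble : ∀ k, k ≥ 1 → ∀ n, ∑ i ∈ Finset.range n, ∏ j ∈ Finset.Icc k (k+i), α j
      ≤ (β k - 1) / (1 - c) := by
    intro k hk n
    match n with
    | 0 =>
      simp only [Finset.range_zero, Finset.sum_empty]
      exact div_nonneg (by linarith [hβ1 k hk]) h1c.le
    | (N+1) => exact key N k hk
  have hsum : ∀ k, k ≥ 1 → Summable (fun n => ∏ j ∈ Finset.Icc k (k+n), α j) := by
    intro k hk
    exact summable_of_sum_range_le (hnonneg k hk) (hble k hk)
  have htle : ∀ k, k ≥ 1 → t k ≤ (β k - c)/(1-c) := by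
    intro k hk
    rw [ht k hk]
    have h1 := Summable.tsum_le_of_sum_range_le (hsum k hk) (hble k hk)
    have h2 : (β k - c)/(1-c) = 1 + (β k - 1)/(1-c) := by
      field_simp
      ring
    rw [h2]
    linarith
  have ht1 : ∀ k, k ≥ 1 → 1 ≤ t k := by
    intro k hk
    rw [ht k hk]
    have := tsum_nonneg (L := SummationFilter.unconditional ℕ) (hnonneg k hk)
    linarith
  have hrec : ∀ k, k ≥ 1 → t k = 1 + α k * t (k+1) := by
    intro k hk
    have hk1 : k + 1 ≥ 1 := Nat.le_add_left 1 k
    rw [ht k hk, ht (k+1) hk1]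
    rw [Summable.tsum_eq_zero_add (hsum k hk)]
    simp only [Nat.add_zero, Finset.Icc_self, Finset.prod_singleton]
    rw [tsum_congr (fun n => hsplit k n), tsum_mul_left]
    ring
  have hu : ∀ k, k ≥ 1 → (1 - α k) * t (k+1) ≤ 1/(1-c) := by
    intro k hk
    have hk1 : k + 1 ≥ 1 := Nat.le_add_left 1 k
    have h1 : t (k+1) * (1-c) ≤ β (k+1) - c := (le_div_iff₀ h1c).mp (htle (k+1) hk1)
    have h2 : t (k+1) * (1-c) ≤ β k := le_trans h1 (by linarith [hβstep k hk])
    rw [hβinv k hk, one_div_mul_eq_div, div_le_div_iff₀ (hβpos k hk) h1c]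
    linarith
  constructor
  · intro k hk
    have hk1 : k + 1 ≥ 1 := Nat.le_add_left 1 k
    have ha0 : 0 ≤ α k := (hα k hk).1
    have ha1 : α k < 1 := (hα k hk).2
    have hs1 : 1 ≤ t (k+1) := ht1 (k+1) hk1
    have h1a : (0:ℝ) < 1 - α k := h1α k hk
    have huk : (1 - α k) * t (k+1) ≤ 3/2 := by
      refine (hu k hk).trans ?_
      rw [div_le_iff₀ h1c]
      linarith
    rw [hrec k hk]
    set s := t (k+1)
    set a := α k
    have hint1 : 0 ≤ (1 + a) * ((1 - a) * s) * (3/2 - (1 - a) * s) :=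
      mul_nonneg (mul_nonneg (by linarith) (by nlinarith)) (by linarith)
    have hintB : 0 ≤ (1 - a) * (3/2 - (1 - a) * s) := mul_nonneg h1a.le (by linarith)
    have key2 : (1 - a) * (s^2 - (1 + a * s)^2 - s) ≤ 0 := by nlinarith [hint1, hintB]
    nlinarith [key2, h1a]
  · intro hclt
    refine ⟨2*c/(1-c), ⟨div_nonneg (by linarith) h1c.le, ?_⟩, ?_⟩
    · rw [div_lt_one h1c]; linarith
    intro k hk
    have hk1 : k + 1 ≥ 1 := Nat.le_add_left 1 k
    have ha0 : 0 ≤ α k := (hα k hk).1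
    have ha1 : α k < 1 := (hα k hk).2
    have hs1 : 1 ≤ t (k+1) := ht1 (k+1) hk1
    have h1a : (0:ℝ) < 1 - α k := h1α k hk
    set m : ℝ := 2*c/(1-c) with hm
    have hmc : m * (1 - c) = 2 * c := by
      rw [hm]; field_simp
    have huk : (1 - α k) * t (k+1) ≤ 1 + m/2 := by
      refine (hu k hk).trans ?_
      rw [div_le_iff₀ h1c]
      nlinarith [hmc]
    rw [hrec k hk]
    set s := t (k+1)
    set a := α k
    have hu0 : 0 ≤ (1 - a) * s := mul_nonneg h1a.le (by linarith)
    have hintC : 0 ≤ (1 - a) * ((1 - a) * s - 1)^2 := mul_nonneg h1a.le (sq_nonneg _)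
    have hintD : 0 ≤ (m - 2*((1 - a) * s - 1)) * ((1 - a) * s) :=
      mul_nonneg (by linarith) hu0
    have key2 : (1 - a) * (s^2 - (1 + a * s)^2 - m * s) ≤ 0 := by
      nlinarith [hintC, hintD]
    nlinarith [key2, h1a]
end

section
/- (Extended descent lemma) Let H be a real Hilbert space, g : H → ℝ convex and differentiable with L-Lipschitz continuous gradient, and s ∈ (0, 1/L]. Then for all x, y ∈ H: g(y − s∇g(y)) ≤ g(x) + ⟨∇g(y), y − x⟩ − (s/2)‖∇g(y)‖² − (s/2)‖∇g(x) − ∇g(y)‖². -/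
open Set

section Aux

variable {H : Type*} [NormedAddCommGroup H] [InnerProductSpace ℝ H] [CompleteSpace H]

local notation "⟪" x ", " y "⟫" => @inner ℝ _ _ x y

lemma aux_line_hasDerivAt (f : H → ℝ) (f' : H → H)
    (hgrad : ∀ z, HasGradientAt f (f' z) z) (x v : H) (t : ℝ) :
    HasDerivAt (fun t : ℝ => f (x + t • v)) ⟪f' (x + t • v), v⟫ t := by
  have h1 : HasDerivAt (fun t : ℝ => x + t • v) v t := by
    simpa using ((hasDerivAt_id t).smul_const v).const_add x
  have h2 := (hgrad (x + t • v)).hasFDerivAt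
  have := h2.comp_hasDerivAt t h1
  simpa [InnerProductSpace.toDual_apply_apply, Function.comp_def] using this

lemma aux_descent (f : H → ℝ) (f' : H → H)
    (hgrad : ∀ z, HasGradientAt f (f' z) z)
    (L : ℝ) (hL : 0 ≤ L) (hlip : ∀ a b : H, ‖f' a - f' b‖ ≤ L * ‖a - b‖)
    (x v : H) :
    f (x + v) ≤ f x + ⟪f' x, v⟫ + L / 2 * ‖v‖ ^ 2 := by
  set c : ℝ := ⟪f' x, v⟫ with hc
  set n : ℝ := ‖v‖ ^ 2 with hn
  set F : ℝ → ℝ := fun t => f x + t * c + L / 2 * t ^ 2 * n - f (x + t • v) with hF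
  have hφ := aux_line_hasDerivAt f f' hgrad x v
  have hFd : ∀ t : ℝ, HasDerivAt F
      (c + L / 2 * (2 * t ^ 1) * n - ⟪f' (x + t • v), v⟫) t := by
    intro t
    exact (((hasDerivAt_mul_const c).const_add (f x)).add
      (((hasDerivAt_pow 2 t).const_mul (L / 2)).mul_const n)).sub (hφ t)
  have hmono : MonotoneOn F (Icc (0:ℝ) 1) := by
    apply monotoneOn_of_hasDerivWithinAt_nonneg (convex_Icc 0 1)
      (Continuous.continuousOn (by
        exact continuous_iff_continuousAt.2 fun t => (hFd t).differentiableAt.continuousAt))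
      (f' := fun t => c + L / 2 * (2 * t ^ 1) * n - ⟪f' (x + t • v), v⟫)
      (fun t _ => (hFd t).hasDerivWithinAt)
    rw [interior_Icc]
    intro t ht
    have h1 : ⟪f' (x + t • v) - f' x, v⟫ ≤ ‖f' (x + t • v) - f' x‖ * ‖v‖ :=
      real_inner_le_norm _ _
    have h2 : ‖f' (x + t • v) - f' x‖ ≤ L * ‖t • v‖ := by
      have := hlip (x + t • v) x
      simpa using this
    have h3 : ‖t • v‖ = t * ‖v‖ := by
      rw [norm_smul, Real.norm_eq_abs, abs_of_pos ht.1]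
    have h4 : ⟪f' (x + t • v) - f' x, v⟫ = ⟪f' (x + t • v), v⟫ - c := by
      rw [inner_sub_left]
    have hv : (0:ℝ) ≤ ‖v‖ := norm_nonneg v
    have h6 : ⟪f' (x + t • v), v⟫ - c ≤ L * t * n := by
      rw [← h4]
      calc ⟪f' (x + t • v) - f' x, v⟫ ≤ ‖f' (x + t • v) - f' x‖ * ‖v‖ := h1
        _ ≤ L * ‖t • v‖ * ‖v‖ := mul_le_mul_of_nonneg_right h2 hv
        _ = L * t * n := by rw [h3, hn]; ring
    simp only [pow_one]
    linarith
  have h01 : F 0 ≤ F 1 := hmono (by constructor <;> norm_num) (by constructor <;> norm_num)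
    zero_le_one
  have hF0 : F 0 = 0 := by simp [hF]
  have hF1 : F 1 = f x + c + L / 2 * n - f (x + v) := by simp [hF]
  rw [hF0, hF1] at h01
  linarith

lemma aux_descent_step (f : H → ℝ) (f' : H → H)
    (hgrad : ∀ z, HasGradientAt f (f' z) z)
    (L : ℝ) (hL : 0 < L) (hlip : ∀ a b : H, ‖f' a - f' b‖ ≤ L * ‖a - b‖)
    (s : ℝ) (hs : 0 < s) (hsL : s * L ≤ 1) (x : H) :
    f (x - s • f' x) ≤ f x - s / 2 * ‖f' x‖ ^ 2 := by
  have h := aux_descent f f' hgrad L hL.le hlip x (-(s • f' x))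
  have h1 : ⟪f' x, -(s • f' x)⟫ = -(s * ‖f' x‖ ^ 2) := by
    rw [inner_neg_right, real_inner_smul_right, real_inner_self_eq_norm_sq]
  have h2 : ‖-(s • f' x)‖ ^ 2 = s ^ 2 * ‖f' x‖ ^ 2 := by
    rw [norm_neg, norm_smul, Real.norm_eq_abs, abs_of_pos hs, mul_pow]
  rw [h1, h2] at h
  have hx : x + -(s • f' x) = x - s • f' x := by abel
  rw [hx] at h
  have hq : ‖f' x‖ ^ 2 ≥ 0 := sq_nonneg _
  nlinarith

lemma aux_convex_grad (f : H → ℝ) (f' : H → H)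
    (hconv : ConvexOn ℝ univ f) (hgrad : ∀ z, HasGradientAt f (f' z) z)
    (x z : H) : f x + ⟪f' x, z - x⟫ ≤ f z := by
  set φ : ℝ → ℝ := fun t => f (x + t • (z - x)) with hφdef
  have φconv : ConvexOn ℝ univ φ := by
    have h := hconv.comp_affineMap
      (AffineMap.const ℝ ℝ x + (LinearMap.toAffineMap (LinearMap.toSpanSingleton ℝ H (z - x))))
    have : (⇑(AffineMap.const ℝ ℝ x + LinearMap.toAffineMap
        (LinearMap.toSpanSingleton ℝ H (z - x)))) ⁻¹' univ = univ := by simp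
    rw [this] at h
    have heq : (f ∘ ⇑(AffineMap.const ℝ ℝ x + LinearMap.toAffineMap
        (LinearMap.toSpanSingleton ℝ H (z - x)))) = φ := by
      funext t
      simp [hφdef, LinearMap.toSpanSingleton_apply, Function.comp]
    rwa [heq] at h
  have hslope := φconv.le_slope_of_hasDerivAt (mem_univ (0:ℝ)) (mem_univ (1:ℝ)) one_pos
    (by simpa using aux_line_hasDerivAt f f' hgrad x (z - x) 0)
  rw [slope_def_field] at hslope
  have hφ0 : φ 0 = f x := by simp [hφdef]
  have hφ1 : φ 1 = f z := by simp [hφdef]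
  rw [hφ0, hφ1] at hslope
  have : (f z - f x) / (1 - 0) = f z - f x := by norm_num
  rw [this] at hslope
  linarith

end Aux

/-- Extended descent lemma. -/
theorem extended_descent_lemma
    {H : Type*} [NormedAddCommGroup H] [InnerProductSpace ℝ H] [CompleteSpace H]
    (g : H → ℝ) (hconv : ConvexOn ℝ Set.univ g) (hdiff : Differentiable ℝ g)
    (L : ℝ) (hL : 0 < L)
    (hlip : LipschitzWith (Real.toNNReal L) (fun z => gradient g z))
    (s : ℝ) (hs : 0 < s) (hsL : s ≤ 1 / L) :
    ∀ x y : H, g (y - s • gradient g y) ≤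
      g x + (inner ℝ (gradient g y) (y - x) : ℝ) - s / 2 * ‖gradient g y‖ ^ 2
        - s / 2 * ‖gradient g x - gradient g y‖ ^ 2 := by
  intro x y
  have hgrad : ∀ z, HasGradientAt g (gradient g z) z := fun z => (hdiff z).hasGradientAt
  have hlip' : ∀ a b : H, ‖gradient g a - gradient g b‖ ≤ L * ‖a - b‖ := by
    intro a b
    have := hlip.dist_le_mul a b
    rwa [dist_eq_norm, dist_eq_norm, Real.coe_toNNReal L hL.le] at this
  have hsL' : s * L ≤ 1 := by
    rw [le_div_iff₀ hL] at hsL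
    linarith
  set u : H := gradient g y with hu
  -- Step 1: descent step at y
  have step1 : g (y - s • u) ≤ g y - s / 2 * ‖u‖ ^ 2 :=
    aux_descent_step g (fun z => gradient g z) hgrad L hL hlip' s hs hsL' y
  -- Step 2: work with h z = g z - ⟪u, z⟫
  set h : H → ℝ := fun z => g z - (inner ℝ u z : ℝ) with hh
  set h' : H → H := fun z => gradient g z - u with hh'
  have hgrad_h : ∀ z, HasGradientAt h (h' z) z := by
    intro z
    rw [hasGradientAt_iff_hasFDerivAt]
    have h1 := (hgrad z).hasFDerivAt
    have h2 : HasFDerivAt (fun w : H => (inner ℝ u w : ℝ)) (innerSL ℝ u) z :=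
      (innerSL ℝ u).hasFDerivAt
    have h3 := h1.sub h2
    refine HasFDerivAt.congr_fderiv h3 ?_
    ext w
    simp [hh', inner_sub_left]
  have hconv_h : ConvexOn ℝ univ h := by
    refine ⟨convex_univ, fun a _ b _ p q hp hq hpq => ?_⟩
    have := hconv.2 (mem_univ a) (mem_univ b) hp hq hpq
    simp only [hh, smul_eq_mul, inner_add_right, real_inner_smul_right]
    simp only [smul_eq_mul] at this
    linarith
  have hlip_h : ∀ a b : H, ‖h' a - h' b‖ ≤ L * ‖a - b‖ := by
    intro a b
    have : h' a - h' b = gradient g a - gradient g b := by simp only [hh']; abel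
    rw [this]
    exact hlip' a b
  -- h' y = 0, so y is a global minimizer of h
  have hy0 : h' y = 0 := by simp [hh', hu]
  have hmin : ∀ w : H, h y ≤ h w := by
    intro w
    have := aux_convex_grad h h' hconv_h hgrad_h y w
    rw [hy0] at this
    simpa using this
  -- descent step for h at x
  have step2 : h (x - s • h' x) ≤ h x - s / 2 * ‖h' x‖ ^ 2 :=
    aux_descent_step h h' hgrad_h L hL hlip_h s hs hsL' x
  have key : h y ≤ h x - s / 2 * ‖h' x‖ ^ 2 := le_trans (hmin _) step2
  -- unfold
  have hx' : h' x = gradient g x - u := rfl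
  have expand : (inner ℝ u (y - x) : ℝ) = (inner ℝ u y : ℝ) - (inner ℝ u x : ℝ) := inner_sub_right u y x
  simp only [hh, hx'] at key
  rw [hu] at *
  linarith [step1, key, expand.ge, expand.le]
end

section
/- (Robbins–Siegmund corollary) Let (Ω, F, ℙ) be a probability space with filtration (R_k), and let (ε_k) be a sequence of nonnegative random variables with ε_k being R_k-measurable. If ∑_{k} (E[ε_k² | R_{k−1}])^{1/2} < +∞ almost surely, then ∑_k ε_k < +∞ almost surely. -/
open MeasureTheory Filter
open scoped ENNReal NNReal

section Aux

variable {Ω : Type*} {m0 : MeasurableSpace Ω} {μ : Measure Ω}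

/-- Conditional Cauchy–Schwarz: for `f ∈ L²`, `μ[f|m] ≤ sqrt (μ[f²|m])` a.e. -/
lemma rs_condexp_le_sqrt_condexp_sq {m : MeasurableSpace Ω}
    [IsProbabilityMeasure μ] (hm : m ≤ m0) {f : Ω → ℝ} (hnn : ∀ ω, 0 ≤ f ω)
    (hf : MemLp f 2 μ) :
    ∀ᵐ ω ∂μ, (μ[f|m]) ω ≤ Real.sqrt ((μ[fun ω' => f ω' ^ 2|m]) ω) := by
  have hint : Integrable f μ := hf.integrable one_le_two
  have hsq : Integrable (fun ω => f ω ^ 2) μ := hf.integrable_sq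
  have key : ∀ q : ℚ, ∀ᵐ ω ∂μ,
      0 ≤ (μ[fun ω' => f ω' ^ 2|m]) ω - 2 * q * (μ[f|m]) ω + (q : ℝ) ^ 2 := by
    intro q
    have h0 : (fun ω => (f ω - q) ^ 2)
        = ((fun ω => f ω ^ 2) + (fun _ => (q : ℝ) ^ 2)) - ((2 * (q : ℝ)) • f) := by
      funext ω
      simp only [Pi.sub_apply, Pi.add_apply, Pi.smul_apply, smul_eq_mul]
      ring
    have h1 : 0 ≤ᵐ[μ] μ[fun ω => (f ω - q) ^ 2|m] :=
      condExp_nonneg (Eventually.of_forall fun ω => sq_nonneg _)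
    have h2 : μ[fun ω => (f ω - q) ^ 2|m]
        =ᵐ[μ] μ[(fun ω => f ω ^ 2) + (fun _ => (q : ℝ) ^ 2)|m] - μ[(2 * (q : ℝ)) • f|m] := by
      rw [h0]
      exact condExp_sub (hsq.add (integrable_const _)) (hint.smul _) m
    have h3 : μ[(fun ω => f ω ^ 2) + (fun _ => (q : ℝ) ^ 2)|m]
        =ᵐ[μ] μ[fun ω => f ω ^ 2|m] + fun _ => (q : ℝ) ^ 2 := by
      refine (condExp_add hsq (integrable_const _) m).trans ?_
      rw [condExp_const hm]
    have h4 : μ[(2 * (q : ℝ)) • f|m] =ᵐ[μ] (2 * (q : ℝ)) • μ[f|m] := condExp_smul _ _ m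
    filter_upwards [h1, h2, h3, h4] with ω hω1 hω2 hω3 hω4
    rw [hω2] at hω1
    simp only [Pi.sub_apply, Pi.zero_apply] at hω1
    rw [hω3, hω4] at hω1
    simp only [Pi.add_apply, Pi.smul_apply, smul_eq_mul, Pi.zero_apply] at hω1
    linarith
  have hb : 0 ≤ᵐ[μ] μ[f|m] := condExp_nonneg (Eventually.of_forall hnn)
  have hkey : ∀ᵐ ω ∂μ, ∀ q : ℚ,
      0 ≤ (μ[fun ω' => f ω' ^ 2|m]) ω - 2 * q * (μ[f|m]) ω + (q : ℝ) ^ 2 :=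
    ae_all_iff.2 key
  filter_upwards [hb, hkey] with ω hbω hqω
  set b := (μ[f|m]) ω with hbdef
  set s := (μ[fun ω' => f ω' ^ 2|m]) ω with hsdef
  have hb2 : b ^ 2 ≤ s := by
    refine le_of_forall_pos_le_add fun e he => ?_
    obtain ⟨q, hq⟩ := exists_rat_near b (Real.sqrt_pos.2 he)
    have h5 : (b - (q : ℝ)) ^ 2 < e := by
      have h6 : |b - (q : ℝ)| ^ 2 < Real.sqrt e ^ 2 := by
        have := abs_nonneg (b - (q : ℝ))
        nlinarith
      rwa [sq_abs, Real.sq_sqrt he.le] at h6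
    have := hqω q
    nlinarith
  calc b = Real.sqrt (b ^ 2) := (Real.sqrt_sq hbω).symm
    _ ≤ Real.sqrt s := Real.sqrt_le_sqrt hb2

/-- If the conditional expectations of a nonnegative adapted sequence are a.s. summable,
then the sequence itself is a.s. summable. -/
lemma rs_summable_of_summable_condexp [IsProbabilityMeasure μ]
    (ℛ : Filtration ℕ m0) (ε : ℕ → Ω → ℝ) (hnn : ∀ k ω, 0 ≤ ε k ω)
    (hint : ∀ k, Integrable (ε k) μ)
    (hsum : ∀ᵐ ω ∂μ, Summable fun k : ℕ => (μ[ε (k + 1)|ℛ k]) ω) :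
    ∀ᵐ ω ∂μ, Summable fun k : ℕ => ε k ω := by
  set b : ℕ → Ω → ℝ := fun k => μ[ε (k + 1)|ℛ k] with hbdef
  set A : ℕ → Ω → ℝ := fun n ω => ∑ k ∈ Finset.range n, b k ω with hAdef
  -- stopping sets
  set S : ℕ → ℕ → Set Ω := fun c n => {ω | ∀ m ≤ n, A (m + 1) ω ≤ c} with hSdef
  have hAmeas : ∀ n, StronglyMeasurable[ℛ n] (A (n + 1)) := by
    intro n
    apply Finset.stronglyMeasurable_fun_sum
    intro k hk
    exact (stronglyMeasurable_condExp).mono (ℛ.mono (Nat.lt_succ_iff.1 (Finset.mem_range.1 hk)))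
  have hSmeas : ∀ c n, MeasurableSet[ℛ n] (S c n) := by
    intro c n
    have : S c n = ⋂ m, ⋂ (_ : m ≤ n), {ω | A (m + 1) ω ≤ (c : ℝ)} := by
      ext ω; simp [hSdef, Set.mem_iInter]
    rw [this]
    refine MeasurableSet.iInter fun m => MeasurableSet.iInter fun hm => ?_
    exact ((hAmeas m).mono (ℛ.mono hm)).measurable measurableSet_Iic
  have hSanti : ∀ c {k n : ℕ}, k ≤ n → S c n ⊆ S c k := by
    intro c k n hkn ω hω m hm
    exact hω m (hm.trans hkn)
  have hbnn : ∀ᵐ ω ∂μ, ∀ k, 0 ≤ b k ω :=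
    ae_all_iff.2 fun k => condExp_nonneg (Eventually.of_forall (hnn (k + 1)))
  -- key integral bound
  have hibd : ∀ c n : ℕ,
      ∑ k ∈ Finset.range n, ∫ ω, (S c k).indicator (ε (k + 1)) ω ∂μ ≤ c := by
    intro c n
    have heq : ∀ k, ∫ ω, (S c k).indicator (ε (k + 1)) ω ∂μ
        = ∫ ω, (S c k).indicator (b k) ω ∂μ := by
      intro k
      rw [integral_indicator (ℛ.le k _ (hSmeas c k)),
        integral_indicator (ℛ.le k _ (hSmeas c k))]
      exact (setIntegral_condExp (ℛ.le k) (hint (k + 1)) (hSmeas c k)).symm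
    simp_rw [heq]
    rw [← integral_finset_sum _ fun k _ => (integrable_condExp).indicator (ℛ.le k _ (hSmeas c k))]
    have hptbd : ∀ᵐ ω ∂μ,
        ∑ k ∈ Finset.range n, (S c k).indicator (b k) ω ≤ (c : ℝ) := by
      filter_upwards [hbnn] with ω hω
      induction n with
      | zero => simp
      | succ n ih =>
        by_cases hmem : ω ∈ S c n
        · calc ∑ k ∈ Finset.range (n + 1), (S c k).indicator (b k) ω
              ≤ ∑ k ∈ Finset.range (n + 1), b k ω := by
                refine Finset.sum_le_sum fun k _ => ?_
                exact Set.indicator_le_self' (fun x _ => hω k) ω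
            _ = A (n + 1) ω := rfl
            _ ≤ c := hmem n le_rfl
        · rw [Finset.sum_range_succ, Set.indicator_of_notMem hmem, add_zero]
          exact ih
    calc ∫ ω, ∑ k ∈ Finset.range n, (S c k).indicator (b k) ω ∂μ
        ≤ ∫ _, (c : ℝ) ∂μ := by
          refine integral_mono_ae ?_ (integrable_const _) hptbd
          exact integrable_finset_sum _ fun k _ =>
            (integrable_condExp).indicator (ℛ.le k _ (hSmeas c k))
      _ = c := by simp
  -- a.e. summability of the stopped series, for each c
  have hstop : ∀ c : ℕ, ∀ᵐ ω ∂μ,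
      Summable fun k : ℕ => (S c k).indicator (ε (k + 1)) ω := by
    intro c
    set f : ℕ → Ω → ℝ := fun k => (S c k).indicator (ε (k + 1)) with hfdef
    have hfint : ∀ k, Integrable (f k) μ :=
      fun k => (hint (k + 1)).indicator (ℛ.le k _ (hSmeas c k))
    have hfnn : ∀ k ω, 0 ≤ f k ω :=
      fun k ω => Set.indicator_nonneg (fun x _ => hnn (k + 1) x) ω
    set G : Ω → ℝ≥0∞ := fun ω => ∑' k, ENNReal.ofReal (f k ω) with hGdef
    have hGmeas : AEMeasurable G μ := by
      apply AEMeasurable.ennreal_tsum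
      exact fun k => (hfint k).aestronglyMeasurable.aemeasurable.ennreal_ofReal
    have hGint : ∫⁻ ω, G ω ∂μ ≤ ENNReal.ofReal c := by
      rw [hGdef]
      simp only
      rw [lintegral_tsum fun k => (hfint k).aestronglyMeasurable.aemeasurable.ennreal_ofReal]
      have hterm : ∀ k, ∫⁻ ω, ENNReal.ofReal (f k ω) ∂μ = ENNReal.ofReal (∫ ω, f k ω ∂μ) :=
        fun k => (ofReal_integral_eq_lintegral_ofReal (hfint k)
          (Eventually.of_forall (hfnn k))).symm
      simp_rw [hterm]
      rw [ENNReal.tsum_eq_iSup_nat]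
      refine iSup_le fun n => ?_
      rw [← ENNReal.ofReal_sum_of_nonneg fun k _ => integral_nonneg (hfnn k)]
      exact ENNReal.ofReal_le_ofReal (hibd c n)
    have hGfin : ∀ᵐ ω ∂μ, G ω < ∞ :=
      ae_lt_top' hGmeas (lt_of_le_of_lt hGint ENNReal.ofReal_lt_top).ne
    filter_upwards [hGfin] with ω hω
    refine summable_of_sum_range_le (c := (G ω).toReal) (fun k => hfnn k ω) fun n => ?_
    have h1 : (∑ k ∈ Finset.range n, ENNReal.ofReal (f k ω)) ≤ G ω := ENNReal.sum_le_tsum _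
    have h2 := ENNReal.toReal_mono hω.ne h1
    have h3 : ∑ k ∈ Finset.range n, f k ω
        = (∑ k ∈ Finset.range n, ENNReal.ofReal (f k ω)).toReal := by
      rw [ENNReal.toReal_sum fun a _ => ENNReal.ofReal_ne_top]
      exact Finset.sum_congr rfl fun k _ => (ENNReal.toReal_ofReal (hfnn k ω)).symm
    rw [show (fun k => (S c k).indicator (ε (k + 1)) ω) = fun k => f k ω from rfl] at *
    rw [h3]
    exact h2
  have hstop' : ∀ᵐ ω ∂μ, ∀ c : ℕ,
      Summable fun k : ℕ => (S c k).indicator (ε (k + 1)) ω := ae_all_iff.2 hstop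
  filter_upwards [hsum, hbnn, hstop'] with ω hsω hbω hcω
  rw [← summable_nat_add_iff 1]
  set c : ℕ := ⌈∑' k, b k ω⌉₊ with hcdef
  have hmem : ∀ k, ω ∈ S c k := by
    intro k m hm
    calc A (m + 1) ω = ∑ j ∈ Finset.range (m + 1), b j ω := rfl
      _ ≤ ∑' j, b j ω := Summable.sum_le_tsum _ (fun j _ => hbω j) hsω
      _ ≤ c := Nat.le_ceil _
  refine (hcω c).congr fun k => ?_
  exact Set.indicator_of_mem (hmem k) _

end Aux

/-- Robbins–Siegmund corollary: if the conditional second moments have summable square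
roots almost surely, then the sequence itself is almost surely summable. -/
theorem robbins_siegmund_corollary
    {Ω : Type*} {m0 : MeasurableSpace Ω} {μ : Measure Ω} [IsProbabilityMeasure μ]
    (ℛ : Filtration ℕ m0)
    (ε : ℕ → Ω → ℝ)
    (hnn : ∀ k ω, 0 ≤ ε k ω)
    (hadapted : Adapted ℛ ε)
    (hL2 : ∀ k, MemLp (ε k) 2 μ)
    (hsum : ∀ᵐ ω ∂μ,
      Summable (fun k : ℕ => Real.sqrt ((μ[fun ω' => (ε k ω') ^ 2 | ℛ (k - 1)]) ω))) :
    ∀ᵐ ω ∂μ, Summable (fun k : ℕ => ε k ω) := by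
  have hsum2 : ∀ᵐ ω ∂μ, Summable fun k : ℕ =>
      Real.sqrt ((μ[fun ω' => (ε (k + 1) ω') ^ 2 | ℛ k]) ω) := by
    filter_upwards [hsum] with ω h1
    have h2 := (summable_nat_add_iff 1).2 h1
    simpa only [Nat.add_sub_cancel] using h2
  have hCS : ∀ k : ℕ, ∀ᵐ ω ∂μ, (μ[ε (k + 1)|ℛ k]) ω
      ≤ Real.sqrt ((μ[fun ω' => (ε (k + 1) ω') ^ 2|ℛ k]) ω) :=
    fun k => rs_condexp_le_sqrt_condexp_sq (ℛ.le k) (hnn (k + 1)) (hL2 (k + 1))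
  have hCS' : ∀ᵐ ω ∂μ, ∀ k : ℕ, (μ[ε (k + 1)|ℛ k]) ω
      ≤ Real.sqrt ((μ[fun ω' => (ε (k + 1) ω') ^ 2|ℛ k]) ω) := ae_all_iff.2 hCS
  have hbnn : ∀ᵐ ω ∂μ, ∀ k : ℕ, 0 ≤ (μ[ε (k + 1)|ℛ k]) ω :=
    ae_all_iff.2 fun k => condExp_nonneg (Filter.Eventually.of_forall (hnn (k + 1)))
  have hsum' : ∀ᵐ ω ∂μ, Summable fun k : ℕ => (μ[ε (k + 1)|ℛ k]) ω := by
    filter_upwards [hsum2, hCS', hbnn] with ω h1 h2 h3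
    exact Summable.of_nonneg_of_le h3 h2 h1
  exact rs_summable_of_summable_condexp ℛ ε hnn
    (fun k => (hL2 k).integrable one_le_two) hsum'
end
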